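/- Let β > 0, ρ ≥ 0, let σ ∈ C¹(ℝ) and W ∈ C²(ℝ) with W' = σ, and let u be a classical solution of the microkinetically regularized wave equation on [0,∞) × [0,1]. Then the generalized energy E(t) = ∫₀¹ [ (ρ/2)(∂ₜu(t,x))² + W(∂ₓu(t,x)) + (β/2)(∂ₓ∂ₜu(t,x))² ] dx is constant in t. -/

import Mathlib

open MeasureTheory

/-- Partial derivative in the first (time) variable. -/
noncomputable def pt (u : ℝ → ℝ → ℝ) : ℝ → ℝ → ℝ := fun t x => deriv (fun s => u s x) t

/-- Partial derivative in the second (space) variable. -/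
noncomputable def px (u : ℝ → ℝ → ℝ) : ℝ → ℝ → ℝ := fun t x => deriv (fun y => u t y) x

section Aux
open Set
noncomputable def D (v : ℝ × ℝ) (f : ℝ × ℝ → ℝ) : ℝ × ℝ → ℝ := fun p => fderiv ℝ f p v

lemma contDiff_D {n : ℕ} {f : ℝ × ℝ → ℝ} (hf : ContDiff ℝ (n + 1 : ℕ) f) (v : ℝ × ℝ) :
    ContDiff ℝ n (D v f) :=
  (hf.fderiv_right (by exact_mod_cast le_rfl)).clm_apply contDiff_const

lemma hasDerivAt_sliceT {f : ℝ × ℝ → ℝ} (hf : Differentiable ℝ f) (t x : ℝ) :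
    HasDerivAt (fun s => f (s, x)) (D (1, 0) f (t, x)) t := by
  have h1 : HasDerivAt (fun s : ℝ => (s, x)) ((1 : ℝ), (0 : ℝ)) t :=
    (hasDerivAt_id t).prodMk (hasDerivAt_const t x)
  exact (hf (t, x)).hasFDerivAt.comp_hasDerivAt t h1

lemma hasDerivAt_sliceX {f : ℝ × ℝ → ℝ} (hf : Differentiable ℝ f) (t x : ℝ) :
    HasDerivAt (fun y => f (t, y)) (D (0, 1) f (t, x)) x := by
  have h1 : HasDerivAt (fun y : ℝ => (t, y)) ((0 : ℝ), (1 : ℝ)) x :=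
    (hasDerivAt_const x t).prodMk (hasDerivAt_id x)
  exact (hf (t, x)).hasFDerivAt.comp_hasDerivAt x h1

lemma D_swap {f : ℝ × ℝ → ℝ} (hf : ContDiff ℝ 2 f) (v w p : ℝ × ℝ) :
    D v (D w f) p = D w (D v f) p := by
  have hd : ContDiff ℝ 1 (fderiv ℝ f) := hf.fderiv_right (by norm_num)
  have hdiff : DifferentiableAt ℝ (fderiv ℝ f) p := (hd.differentiable one_ne_zero) p
  have e1 : ∀ a b : ℝ × ℝ, fderiv ℝ (fun q => fderiv ℝ f q b) p a
      = fderiv ℝ (fderiv ℝ f) p a b := by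
    intro a b
    rw [fderiv_clm_apply hdiff (differentiableAt_const b)]
    simp
  have hsymm : IsSymmSndFDerivAt ℝ f p := hf.contDiffAt.isSymmSndFDerivAt (by norm_num)
  show fderiv ℝ (fun q => fderiv ℝ f q w) p v = fderiv ℝ (fun q => fderiv ℝ f q v) p w
  rw [e1 v w, e1 w v, hsymm v w]

end Aux

/-- `u` is a classical solution of the microkinetically regularized wave equation
`ρ ∂ₜ²u = ∂ₓ(σ(∂ₓu) + β ∂ₓ∂ₜ²u)` on `[0,∞) × [0,1]`, with boundary conditions
`u(t,0) = 0` and `σ(∂ₓu(t,1)) + β ∂ₓ∂ₜ²u(t,1) = 0`; all partial derivatives up to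
fourth order exist and are continuous. -/
def IsClassicalSolution (β ρ : ℝ) (σ : ℝ → ℝ) (u : ℝ → ℝ → ℝ) : Prop :=
  ContDiff ℝ 4 (Function.uncurry u) ∧
  (∀ t ∈ Set.Ici (0:ℝ), ∀ x ∈ Set.Ioo (0:ℝ) 1,
    ρ * pt (pt u) t x = deriv (fun y => σ (px u t y) + β * px (pt (pt u)) t y) x) ∧
  (∀ t ∈ Set.Ici (0:ℝ), u t 0 = 0) ∧
  (∀ t ∈ Set.Ici (0:ℝ), σ (px u t 1) + β * px (pt (pt u)) t 1 = 0)

open Set in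
/-- for any classical solution of the microkinetically regularized
wave equation the generalized energy
`E(t) = ∫₀¹ (ρ/2)(∂ₜu)² + W(∂ₓu) + (β/2)(∂ₓ∂ₜu)² dx` is conserved. -/
theorem stmt7 (β ρ : ℝ) (hβ : 0 < β) (hρ : 0 ≤ ρ)
    (σ W : ℝ → ℝ) (hσ : ContDiff ℝ 1 σ) (hW : ContDiff ℝ 2 W) (hWσ : deriv W = σ)
    (u : ℝ → ℝ → ℝ) (hu : IsClassicalSolution β ρ σ u) :
    ∀ s ∈ Set.Ici (0:ℝ), ∀ t ∈ Set.Ici (0:ℝ),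
      (∫ x in Set.Ioo (0:ℝ) 1,
        (ρ/2) * (pt u s x)^2 + W (px u s x) + (β/2) * (px (pt u) s x)^2) =
      (∫ x in Set.Ioo (0:ℝ) 1,
        (ρ/2) * (pt u t x)^2 + W (px u t x) + (β/2) * (px (pt u) t x)^2) := by
  obtain ⟨hU, hPDE, hBC0, hBC1⟩ := hu
  set U : ℝ × ℝ → ℝ := Function.uncurry u with hUdef
  set A1 : ℝ × ℝ → ℝ := D (1, 0) U with hA1def
  set A2 : ℝ × ℝ → ℝ := D (0, 1) U with hA2def
  set A11 : ℝ × ℝ → ℝ := D (1, 0) A1 with hA11def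
  set A12 : ℝ × ℝ → ℝ := D (0, 1) A1 with hA12def
  set A112 : ℝ × ℝ → ℝ := D (0, 1) A11 with hA112def
  have hU4 : ContDiff ℝ (3 + 1 : ℕ) U := by exact_mod_cast hU
  have hA1c : ContDiff ℝ (2 + 1 : ℕ) A1 := contDiff_D hU4 _
  have hA2c : ContDiff ℝ (2 + 1 : ℕ) A2 := contDiff_D hU4 _
  have hA11c : ContDiff ℝ (1 + 1 : ℕ) A11 := contDiff_D hA1c _
  have hA12c : ContDiff ℝ (1 + 1 : ℕ) A12 := contDiff_D hA1c _
  have hA112c : ContDiff ℝ (0 + 1 : ℕ) A112 := contDiff_D hA11c _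
  have hUd : Differentiable ℝ U := hU.differentiable (by norm_num)
  have hA1d : Differentiable ℝ A1 := hA1c.differentiable (by norm_num)
  have hA2d : Differentiable ℝ A2 := hA2c.differentiable (by norm_num)
  have hA11d : Differentiable ℝ A11 := hA11c.differentiable (by norm_num)
  have hA12d : Differentiable ℝ A12 := hA12c.differentiable (by norm_num)
  have hA112d : Differentiable ℝ A112 := hA112c.differentiable (by norm_num)
  -- identification of the partial derivatives
  have ept : ∀ t x, pt u t x = A1 (t, x) := fun t x => (hasDerivAt_sliceT hUd t x).deriv
  have epx : ∀ t x, px u t x = A2 (t, x) := fun t x => (hasDerivAt_sliceX hUd t x).deriv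
  have ept2 : ∀ t x, pt (pt u) t x = A11 (t, x) := by
    intro t x
    have h : (fun s => pt u s x) = fun s => A1 (s, x) := funext fun s => ept s x
    show deriv (fun s => pt u s x) t = _
    rw [h]; exact (hasDerivAt_sliceT hA1d t x).deriv
  have epx12 : ∀ t x, px (pt u) t x = A12 (t, x) := by
    intro t x
    have h : (fun y => pt u t y) = fun y => A1 (t, y) := funext fun y => ept t y
    show deriv (fun y => pt u t y) x = _
    rw [h]; exact (hasDerivAt_sliceX hA1d t x).deriv
  have epx112 : ∀ t x, px (pt (pt u)) t x = A112 (t, x) := by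
    intro t x
    have h : (fun y => pt (pt u) t y) = fun y => A11 (t, y) := funext fun y => ept2 t y
    show deriv (fun y => pt (pt u) t y) x = _
    rw [h]; exact (hasDerivAt_sliceX hA11d t x).deriv
  -- symmetry of mixed partials
  have sym1 : ∀ p, D (1, 0) A2 p = A12 p := fun p =>
    D_swap (hU.of_le (by norm_num)) (1, 0) (0, 1) p
  have sym2 : ∀ p, D (1, 0) A12 p = A112 p := fun p =>
    D_swap (hA1c.of_le (by exact_mod_cast Nat.le_succ 2)) (1, 0) (0, 1) p
  -- the energy density and its time derivative
  set F : ℝ → ℝ → ℝ :=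
    fun t x => (ρ/2) * (A1 (t, x))^2 + W (A2 (t, x)) + (β/2) * (A12 (t, x))^2 with hFdef
  set G : ℝ → ℝ → ℝ :=
    fun t x => ρ * A1 (t, x) * A11 (t, x) + σ (A2 (t, x)) * A12 (t, x)
      + β * (A12 (t, x) * A112 (t, x)) with hGdef
  have cA1 := hA1c.continuous
  have cA2 := hA2c.continuous
  have cA11 := hA11c.continuous
  have cA12 := hA12c.continuous
  have cA112 := hA112c.continuous
  have cW := hW.continuous
  have cσ := hσ.continuous
  have hFcont : Continuous fun p : ℝ × ℝ => F p.1 p.2 := by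
    simp only [hFdef]; fun_prop
  have hGcont : Continuous fun p : ℝ × ℝ => G p.1 p.2 := by
    simp only [hGdef]; fun_prop
  have hderivT : ∀ t x, HasDerivAt (fun s => F s x) (G t x) t := by
    intro t x
    have h1 : HasDerivAt (fun s => A1 (s, x)) (A11 (t, x)) t := hasDerivAt_sliceT hA1d t x
    have h2 : HasDerivAt (fun s => A2 (s, x)) (A12 (t, x)) t := by
      have := hasDerivAt_sliceT hA2d t x; rwa [sym1] at this
    have h3 : HasDerivAt (fun s => A12 (s, x)) (A112 (t, x)) t := by
      have := hasDerivAt_sliceT hA12d t x; rwa [sym2] at this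
    have hWd : HasDerivAt W (σ (A2 (t, x))) (A2 (t, x)) := by
      have := ((hW.differentiable two_ne_zero) (A2 (t, x))).hasDerivAt
      rwa [hWσ] at this
    have H1 : HasDerivAt (fun s => (ρ/2) * (A1 (s, x))^2) (ρ * A1 (t, x) * A11 (t, x)) t := by
      have := (h1.fun_pow 2).const_mul (ρ/2)
      refine this.congr_deriv ?_; push_cast; ring
    have H2 : HasDerivAt (fun s => W (A2 (s, x))) (σ (A2 (t, x)) * A12 (t, x)) t :=
      hWd.comp t h2
    have H3 : HasDerivAt (fun s => (β/2) * (A12 (s, x))^2)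
        (β * (A12 (t, x) * A112 (t, x))) t := by
      have := (h3.fun_pow 2).const_mul (β/2)
      refine this.congr_deriv ?_; push_cast; ring
    exact (H1.add H2).add H3
  -- the energy function and its derivative
  set E : ℝ → ℝ := fun t => ∫ x in (0:ℝ)..1, F t x with hEdef
  have hE : ∀ t₀ : ℝ, HasDerivAt E (∫ x in (0:ℝ)..1, G t₀ x) t₀ := by
    intro t₀
    obtain ⟨C, hC⟩ := (IsCompact.prod (isCompact_Icc (a := t₀ - 1) (b := t₀ + 1))
      (isCompact_Icc (a := (0:ℝ)) (b := 1))).exists_bound_of_continuousOn hGcont.continuousOn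
    have key := intervalIntegral.hasDerivAt_integral_of_dominated_loc_of_deriv_le
      (F := F) (F' := G) (x₀ := t₀) (a := (0:ℝ)) (b := 1) (bound := fun _ => C)
      (μ := volume) (Metric.ball_mem_nhds t₀ zero_lt_one)
      (Filter.Eventually.of_forall fun t =>
        (hFcont.comp (continuous_const.prodMk continuous_id)).aestronglyMeasurable)
      ((hFcont.comp (continuous_const.prodMk continuous_id)).intervalIntegrable 0 1)
      ((hGcont.comp (continuous_const.prodMk continuous_id)).aestronglyMeasurable)
      (Filter.Eventually.of_forall fun x hx t (ht : t ∈ Metric.ball t₀ 1) => by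
        apply hC (t, x)
        refine ⟨?_, ?_⟩
        · rw [Metric.mem_ball, Real.dist_eq] at ht
          exact ⟨by dsimp only; linarith [abs_lt.1 ht], by dsimp only; linarith [abs_lt.1 ht]⟩
        · rw [Set.uIoc_of_le (zero_le_one (α := ℝ))] at hx
          exact ⟨hx.1.le, hx.2⟩)
      (intervalIntegrable_const)
      (Filter.Eventually.of_forall fun x _ t _ => hderivT t x)
    exact key.2
  -- the derivative vanishes for positive times
  have hEzero : ∀ t : ℝ, 0 < t → (∫ x in (0:ℝ)..1, G t x) = 0 := by
    intro t ht
    set H : ℝ → ℝ := fun x => A1 (t, x) * (σ (A2 (t, x)) + β * A112 (t, x)) with hHdef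
    have hHcont : ContinuousOn H (Icc 0 1) := by
      apply Continuous.continuousOn; simp only [hHdef]; fun_prop
    have hHd : ∀ x ∈ Ioo (0:ℝ) 1, HasDerivAt H (G t x) x := by
      intro x hx
      have h1 : HasDerivAt (fun y => A1 (t, y)) (A12 (t, x)) x := hasDerivAt_sliceX hA1d t x
      have hΦdiff : DifferentiableAt ℝ (fun y => σ (A2 (t, y)) + β * A112 (t, y)) x := by
        have d1 : DifferentiableAt ℝ (fun y => A2 (t, y)) x :=
          (hasDerivAt_sliceX hA2d t x).differentiableAt
        have d2 : DifferentiableAt ℝ (fun y => A112 (t, y)) x :=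
          (hasDerivAt_sliceX hA112d t x).differentiableAt
        exact (((hσ.differentiable one_ne_zero) _).comp x d1).add (d2.const_mul β)
      have hΦderiv : deriv (fun y => σ (A2 (t, y)) + β * A112 (t, y)) x = ρ * A11 (t, x) := by
        have hfun : (fun y => σ (px u t y) + β * px (pt (pt u)) t y)
            = fun y => σ (A2 (t, y)) + β * A112 (t, y) := by
          funext y; rw [epx, epx112]
        have := (hPDE t (le_of_lt ht) x hx).symm
        rw [hfun, ept2] at this
        exact this
      have h2 : HasDerivAt (fun y => σ (A2 (t, y)) + β * A112 (t, y)) (ρ * A11 (t, x)) x := by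
        have := hΦdiff.hasDerivAt; rwa [hΦderiv] at this
      have := h1.mul h2
      refine this.congr_deriv ?_
      simp only [hGdef]; ring
    have hGint : IntervalIntegrable (G t) volume 0 1 :=
      (hGcont.comp (continuous_const.prodMk continuous_id)).intervalIntegrable 0 1
    have hFTC := intervalIntegral.integral_eq_sub_of_hasDerivAt_of_le zero_le_one
      hHcont hHd hGint
    have hH1 : H 1 = 0 := by
      have hb := hBC1 t (le_of_lt ht)
      rw [epx, epx112] at hb
      simp only [hHdef, hb, mul_zero]
    have hH0 : H 0 = 0 := by
      have hA10 : A1 (t, 0) = 0 := by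
        rw [← ept]
        have hev : (fun s => u s 0) =ᶠ[nhds t] (fun _ => (0:ℝ)) := by
          filter_upwards [Ioi_mem_nhds ht] with s hs
          exact hBC0 s (Set.mem_Ici.2 (le_of_lt hs))
        show deriv (fun s => u s 0) t = 0
        rw [hev.deriv_eq, deriv_const]
      simp only [hHdef, hA10, zero_mul]
    rw [hFTC, hH1, hH0, sub_zero]
  -- E is constant on positive reals
  have hconst : ∀ a b : ℝ, 0 < a → a ≤ b → E b = E a := by
    intro a b ha hab
    have := constant_of_has_deriv_right_zero (f := E) (a := a) (b := b)
      (fun x _ => (hE x).differentiableAt.continuousAt.continuousWithinAt)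
      (fun x hx => by
        have h := hE x
        rw [hEzero x (lt_of_lt_of_le ha hx.1)] at h
        exact h.hasDerivWithinAt)
    exact this b (right_mem_Icc.2 hab)
  have hpos : ∀ t : ℝ, 0 < t → E t = E 1 := by
    intro t ht
    rcases le_or_gt t 1 with h | h
    · exact (hconst t 1 ht h).symm
    · exact hconst 1 t one_pos h.le
  have hzero : E 0 = E 1 := by
    have h1 : Filter.Tendsto E (nhdsWithin 0 (Ioi 0)) (nhds (E 0)) :=
      ((hE 0).differentiableAt.continuousAt.continuousWithinAt).tendsto
    have h2 : Filter.Tendsto E (nhdsWithin 0 (Ioi 0)) (nhds (E 1)) := by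
      apply Filter.Tendsto.congr' _ tendsto_const_nhds
      filter_upwards [self_mem_nhdsWithin] with x hx
      exact (hpos x hx).symm
    exact tendsto_nhds_unique h1 h2
  have hall : ∀ t : ℝ, 0 ≤ t → E t = E 1 := by
    intro t ht
    rcases eq_or_lt_of_le ht with h | h
    · rw [← h]; exact hzero
    · exact hpos t h
  -- convert the statement integrals to E
  have conv : ∀ r : ℝ, (∫ x in Set.Ioo (0:ℝ) 1,
      (ρ/2) * (pt u r x)^2 + W (px u r x) + (β/2) * (px (pt u) r x)^2) = E r := by
    intro r
    rw [← MeasureTheory.integral_Ioc_eq_integral_Ioo,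
      ← intervalIntegral.integral_of_le zero_le_one]
    exact intervalIntegral.integral_congr fun x _ => by
      simp only [hFdef]; rw [ept, epx, epx12]
  intro s hs t ht
  rw [conv s, conv t, hall s hs, hall t ht]
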